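/- The circulant graphs C₃₂({1,2,4,15}) and C₃₂({2,4,7,9}) are isomorphic as simple graphs, but they are not Adám isomorphic: for every unit x of ℤ/32ℤ, x·({1,2,4,15} ∪ -{1,2,4,15}) ≠ {2,4,7,9} ∪ -{2,4,7,9} as subsets of ℤ/32ℤ. -/

import Mathlib

/-! The map fixing the even vertices of `ZMod 32` and translating the odd ones by `8` is a graph
isomorphism: it preserves differences of vertices of equal parity and shifts the other differences
by `±8`, which carries `{±1, ±15}` onto `{±7, ±9}`, while both connection sets have the same even
part `{±2, ±4}`.

A unit `x` is odd, so if `x • {±1, ±2, ±4, ±15} = {±2, ±4, ±7, ±9}` then `x = x • 1` lies in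
`{±7, ±9}`, and `x • 2 = ±14` would have to lie in `{±2, ±4, ±7, ±9}`, which it does not. -/

open Pointwise

/-- The circulant graph `Cₙ(R)`: vertices are `ZMod n`, and distinct `u v` are
adjacent iff `u - v ∈ R` or `v - u ∈ R`. -/
def circulantGraph (n : ℕ) (R : Set (ZMod n)) : SimpleGraph (ZMod n) where
  Adj u v := u ≠ v ∧ (u - v ∈ R ∨ v - u ∈ R)
  symm := ⟨fun u v h => ⟨h.1.symm, h.2.symm⟩⟩
  loopless := ⟨fun u h => h.1 rfl⟩

theorem circulantGraph_adj_iff {n : ℕ} {R : Set (ZMod n)} {u v : ZMod n} :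
    (circulantGraph n R).Adj u v ↔ u ≠ v ∧ u - v ∈ R ∪ -R := by
  simp only [circulantGraph, Set.mem_union, Set.mem_neg, neg_sub]

def circulantGraph.isoOfSubMemIff {n : ℕ} {R S : Set (ZMod n)} (e : ZMod n ≃ ZMod n)
    (he : ∀ u v, e u - e v ∈ S ∪ -S ↔ u - v ∈ R ∪ -R) :
    circulantGraph n R ≃g circulantGraph n S where
  toEquiv := e
  map_rel_iff' := by simp only [circulantGraph_adj_iff, he, ne_eq, e.injective.eq_iff, implies_true]

namespace Circulant32

def parity : ZMod 32 →+* ZMod 2 := ZMod.castHom (by norm_num) _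

theorem parity_eight : parity 8 = 0 := by decide

theorem parity_sub_eq_zero_iff {u v : ZMod 32} : parity (u - v) = 0 ↔ parity u = parity v := by
  rw [map_sub, sub_eq_zero]

def shiftOdd (v : ZMod 32) : ZMod 32 := if parity v = 0 then v else v + 8

def shiftOddEquiv : ZMod 32 ≃ ZMod 32 where
  toFun := shiftOdd
  invFun v := if parity v = 0 then v else v - 8
  left_inv v := by by_cases h : parity v = 0 <;> simp [shiftOdd, h, parity_eight]
  right_inv v := by by_cases h : parity v = 0 <;> simp [shiftOdd, h, parity_eight]

theorem shiftOdd_sub_of_parity_eq {u v : ZMod 32} (h : parity u = parity v) :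
    shiftOdd u - shiftOdd v = u - v := by
  by_cases hv : parity v = 0 <;> simp [shiftOdd, h, hv]

theorem shiftOdd_sub_of_parity_ne {u v : ZMod 32} (h : parity u ≠ parity v) :
    shiftOdd u - shiftOdd v = u - v + 8 ∨ shiftOdd u - shiftOdd v = u - v - 8 := by
  by_cases hu : parity u = 0
  · have hv : parity v ≠ 0 := hu ▸ Ne.symm h
    right; simp only [shiftOdd, hu, hv, if_true, if_false]; ring
  · have hv : parity v = 0 := by
      have zmod_two : ∀ a b : ZMod 2, a ≠ 0 → a ≠ b → b = 0 := by decide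
      exact zmod_two _ _ hu h
    left; simp only [shiftOdd, hu, hv, if_true, if_false]; ring

def connA : Finset (ZMod 32) := {1, 2, 4, 15, 17, 28, 30, 31}

def connB : Finset (ZMod 32) := {2, 4, 7, 9, 23, 25, 28, 30}

theorem union_neg_eq_connA : ({1, 2, 4, 15} : Set (ZMod 32)) ∪ -{1, 2, 4, 15} = connA := by
  ext d
  simp only [Set.mem_union, Set.mem_neg, Set.mem_insert_iff, Set.mem_singleton_iff, connA,
    Finset.coe_insert, Finset.coe_singleton]
  revert d; decide

theorem union_neg_eq_connB : ({2, 4, 7, 9} : Set (ZMod 32)) ∪ -{2, 4, 7, 9} = connB := by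
  ext d
  simp only [Set.mem_union, Set.mem_neg, Set.mem_insert_iff, Set.mem_singleton_iff, connB,
    Finset.coe_insert, Finset.coe_singleton]
  revert d; decide

theorem mem_connB_iff_of_parity_eq_zero :
    ∀ d : ZMod 32, parity d = 0 → (d ∈ connB ↔ d ∈ connA) := by
  decide

theorem mem_connB_iff_of_parity_ne_zero : ∀ d : ZMod 32, parity d ≠ 0 →
    (d + 8 ∈ connB ↔ d ∈ connA) ∧ (d - 8 ∈ connB ↔ d ∈ connA) := by
  decide

theorem shiftOdd_sub_mem_connB_iff (u v : ZMod 32) :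
    shiftOdd u - shiftOdd v ∈ connB ↔ u - v ∈ connA := by
  by_cases h : parity u = parity v
  · rw [shiftOdd_sub_of_parity_eq h]
    exact mem_connB_iff_of_parity_eq_zero _ (parity_sub_eq_zero_iff.2 h)
  · have hodd := mem_connB_iff_of_parity_ne_zero _ (mt parity_sub_eq_zero_iff.1 h)
    rcases shiftOdd_sub_of_parity_ne h with hplus | hminus
    · rw [hplus]; exact hodd.1
    · rw [hminus]; exact hodd.2

theorem two_mul_notMem_connB : ∀ y : ZMod 32, parity y ≠ 0 → y ∈ connB → 2 * y ∉ connB := by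
  decide

end Circulant32

theorem stmt18 :
    Nonempty (circulantGraph 32 ({1,2,4,15} : Set (ZMod 32)) ≃g circulantGraph 32 ({2,4,7,9} : Set (ZMod 32))) ∧
    ∀ x : (ZMod 32)ˣ,
      (fun r => (x : ZMod 32) * r) '' (({1,2,4,15} : Set (ZMod 32)) ∪ -({1,2,4,15} : Set (ZMod 32))) ≠ ({2,4,7,9} : Set (ZMod 32)) ∪ -({2,4,7,9} : Set (ZMod 32)) := by
  refine ⟨⟨circulantGraph.isoOfSubMemIff Circulant32.shiftOddEquiv fun u v => ?_⟩, fun x hx => ?_⟩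
  · rw [Circulant32.union_neg_eq_connA, Circulant32.union_neg_eq_connB]
    exact Circulant32.shiftOdd_sub_mem_connB_iff u v
  · have hmem : ∀ r ∈ ({1, 2, 4, 15} : Set (ZMod 32)), (x : ZMod 32) * r ∈ Circulant32.connB :=
      fun r hr => by
        rw [← Finset.mem_coe, ← Circulant32.union_neg_eq_connB, ← hx]
        exact Set.mem_image_of_mem _ (Or.inl hr)
    have hx1 : (x : ZMod 32) ∈ Circulant32.connB := by simpa using hmem 1 (by simp)
    have hx2 : 2 * (x : ZMod 32) ∈ Circulant32.connB := by rw [mul_comm]; exact hmem 2 (by simp)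
    exact Circulant32.two_mul_notMem_connB _ (x.isUnit.map Circulant32.parity).ne_zero hx1 hx2
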